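/- For a subset A of a Tychonoff space X, the characteristic function 1_A : X → ℝ is of Baire class one if and only if A is a CZ-set, i.e., A is simultaneously a Zer_σ-set and a Coz_δ-set. -/

import Mathlib

/-- `A` is a zero set: the preimage of `{0}` under a continuous real-valued function. -/
def IsZeroSet {X : Type*} [TopologicalSpace X] (A : Set X) : Prop :=
  ∃ f : X → ℝ, Continuous f ∧ A = f ⁻¹' {0}

/-- `A` is a cozero set: the complement of a zero set. -/
def IsCozeroSet {X : Type*} [TopologicalSpace X] (A : Set X) : Prop :=
  IsZeroSet Aᶜ

/-- `A` is a `Zer_σ`-set: a countable union of zero sets. -/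
def IsZerSigma {X : Type*} [TopologicalSpace X] (A : Set X) : Prop :=
  ∃ Z : ℕ → Set X, (∀ n, IsZeroSet (Z n)) ∧ A = ⋃ n, Z n

/-- `A` is a `Coz_δ`-set: a countable intersection of cozero sets. -/
def IsCozDelta {X : Type*} [TopologicalSpace X] (A : Set X) : Prop :=
  ∃ U : ℕ → Set X, (∀ n, IsCozeroSet (U n)) ∧ A = ⋂ n, U n

/-- `A` is a `CZ`-set: simultaneously a `Zer_σ`-set and a `Coz_δ`-set. -/
def IsCZSet {X : Type*} [TopologicalSpace X] (A : Set X) : Prop :=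
  IsZerSigma A ∧ IsCozDelta A

/-- `X` is a `CZ`-space: every `Zer_σ`-set is a `Coz_δ`-set. -/
def IsCZSpace (X : Type*) [TopologicalSpace X] : Prop :=
  ∀ A : Set X, IsZerSigma A → IsCozDelta A

/-- `A` is an `F_σ`-set: a countable union of closed sets. -/
def IsFSigma {X : Type*} [TopologicalSpace X] (A : Set X) : Prop :=
  ∃ F : ℕ → Set X, (∀ n, IsClosed (F n)) ∧ A = ⋃ n, F n

/-- `f` is of Baire class one: a pointwise limit of a sequence of continuous functions. -/
def IsBaireOne {X : Type*} [TopologicalSpace X] (f : X → ℝ) : Prop :=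
  ∃ g : ℕ → X → ℝ, (∀ n, Continuous (g n)) ∧
    ∀ x, Filter.Tendsto (fun n => g n x) Filter.atTop (nhds (f x))

open Filter Topology

lemma isZeroSet_ge {X : Type*} [TopologicalSpace X] {f : X → ℝ} (hf : Continuous f) (c : ℝ) :
    IsZeroSet {x | c ≤ f x} := by
  refine ⟨fun x => min (f x - c) 0, by continuity, ?_⟩
  ext x
  simp [min_eq_right_iff, sub_nonneg]

lemma isZeroSet_iInter {X : Type*} [TopologicalSpace X] {Z : ℕ → Set X}
    (h : ∀ n, IsZeroSet (Z n)) : IsZeroSet (⋂ n, Z n) := by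
  choose f hf hZ using h
  set t : ℕ → X → ℝ := fun n x => (1/2 : ℝ)^n * min |f n x| 1 with ht
  have htn : ∀ n x, 0 ≤ t n x := fun n x =>
    mul_nonneg (by positivity) (le_min (abs_nonneg _) one_pos.le)
  have hbd : ∀ n x, ‖t n x‖ ≤ (1/2 : ℝ)^n := by
    intro n x
    rw [Real.norm_eq_abs, abs_of_nonneg (htn n x)]
    calc (1/2 : ℝ)^n * min |f n x| 1 ≤ (1/2:ℝ)^n * 1 :=
          mul_le_mul_of_nonneg_left (min_le_right _ _) (by positivity)
      _ = (1/2:ℝ)^n := mul_one _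
  have hsum : ∀ x, Summable (fun n => t n x) := fun x =>
    Summable.of_nonneg_of_le (fun n => htn n x) (fun n => by
      simpa [Real.norm_eq_abs, abs_of_nonneg (htn n x)] using hbd n x)
      summable_geometric_two
  refine ⟨fun x => ∑' n, t n x, ?_, ?_⟩
  · exact continuous_tsum (fun n => by fun_prop) summable_geometric_two hbd
  · ext x
    simp only [Set.mem_iInter, Set.mem_preimage, Set.mem_singleton_iff]
    constructor
    · intro hx
      have hsum0 : (∑' n, t n x) = 0 := by
        have : ∀ n, t n x = 0 := by
          intro n
          have hxn : x ∈ Z n := hx n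
          rw [hZ n] at hxn
          simp only [Set.mem_preimage, Set.mem_singleton_iff] at hxn
          simp [ht, hxn]
        simp [tsum_congr this]
      exact hsum0
    · intro hx
      intro n
      have h1 : t n x ≤ ∑' m, t m x := Summable.le_tsum (hsum x) n (fun m _ => htn m x)
      have h0 : t n x = 0 := le_antisymm (hx ▸ h1) (htn n x)
      have hmin : min |f n x| 1 = 0 := by
        have : (1/2:ℝ)^n ≠ 0 := by positivity
        simp only [ht, mul_eq_zero] at h0
        tauto
      have : |f n x| = 0 := by
        rcases le_total |f n x| 1 with hle | hle
        · rwa [min_eq_left hle] at hmin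
        · rw [min_eq_right hle] at hmin; norm_num at hmin
      rw [hZ n]
      simpa using abs_eq_zero.mp this

lemma exists_sep {X : Type*} [TopologicalSpace X] {Z V : Set X} (hZ : IsZeroSet Z)
    (hV : IsCozeroSet V) (hZV : Z ⊆ V) :
    ∃ g : X → ℝ, Continuous g ∧ (∀ x ∈ Z, g x = 1) ∧ (∀ x ∉ V, g x = 0) := by
  obtain ⟨f, hf, hfZ⟩ := hZ
  obtain ⟨h, hh, hhV⟩ := hV
  have hden : ∀ x, |f x| + |h x| ≠ 0 := by
    intro x hx
    have hf0 : f x = 0 := abs_eq_zero.mp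
      (le_antisymm (by linarith [abs_nonneg (f x), abs_nonneg (h x)]) (abs_nonneg _))
    have hh0 : h x = 0 := abs_eq_zero.mp
      (le_antisymm (by linarith [abs_nonneg (f x), abs_nonneg (h x)]) (abs_nonneg _))
    have hxZ : x ∈ Z := by rw [hfZ]; simpa using hf0
    have hxV : x ∈ Vᶜ := by rw [hhV]; simpa using hh0
    exact hxV (hZV hxZ)
  refine ⟨fun x => |h x| / (|f x| + |h x|), ?_, ?_, ?_⟩
  · exact (hh.abs).div ((hf.abs).add hh.abs) hden
  · intro x hx
    have hf0 : f x = 0 := by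
      rw [hfZ] at hx; simpa using hx
    have : |h x| ≠ 0 := by
      intro h0
      exact hden x (by rw [hf0, h0]; simp)
    field_simp [hf0]
    simp [hf0]
  · intro x hx
    have hh0 : h x = 0 := by
      have : x ∈ Vᶜ := hx
      rw [hhV] at this; simpa using this
    simp [hh0]

lemma isZerSigma_of_baireOne {X : Type*} [TopologicalSpace X] {f : X → ℝ}
    (hf : IsBaireOne f) (c : ℝ) : IsZerSigma {x | c < f x} := by
  obtain ⟨g, hg, hlim⟩ := hf
  set S : ℕ × ℕ → Set X := fun p => ⋂ n, {x | c + 1/(p.1+1) ≤ g (p.2 + n) x} with hS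
  have hSz : ∀ p, IsZeroSet (S p) :=
    fun p => isZeroSet_iInter (fun n => isZeroSet_ge (hg _) _)
  have hset : {x | c < f x} = ⋃ p, S p := by
    ext x
    simp only [Set.mem_setOf_eq, Set.mem_iUnion, hS, Set.mem_iInter]
    constructor
    · intro hx
      obtain ⟨m, hm⟩ := exists_nat_one_div_lt (sub_pos.2 hx)
      have h1 : c + 1/((m:ℝ)+1) < f x := by
        push_cast at hm ⊢; linarith
      have hev : ∀ᶠ n in Filter.atTop, c + 1/((m:ℝ)+1) < g n x :=
        (hlim x).eventually (eventually_gt_nhds h1)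
      obtain ⟨N, hN⟩ := Filter.eventually_atTop.mp hev
      exact ⟨(m, N), fun n => (hN (N + n) (Nat.le_add_right _ _)).le⟩
    · rintro ⟨⟨m, N⟩, hp⟩
      have hle : c + 1/((m:ℝ)+1) ≤ f x := by
        refine ge_of_tendsto (hlim x) ?_
        refine Filter.eventually_atTop.mpr ⟨N, fun n hn => ?_⟩
        have := hp (n - N)
        simpa [Nat.add_sub_cancel' hn] using this
      have : (0:ℝ) < 1/((m:ℝ)+1) := by positivity
      linarith
  set e : ℕ ≃ ℕ × ℕ := (Denumerable.eqv (ℕ × ℕ)).symm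
  exact ⟨fun n => S (e n), fun n => hSz _, by
    rw [hset, ← e.surjective.iUnion_comp S]⟩

lemma IsBaireOne.neg {X : Type*} [TopologicalSpace X] {f : X → ℝ}
    (hf : IsBaireOne f) : IsBaireOne (-f) := by
  obtain ⟨g, hg, hlim⟩ := hf
  exact ⟨fun n => -(g n), fun n => (hg n).neg, fun x => (hlim x).neg⟩

/-- The characteristic function of `A` is Baire-one iff `A` is a `CZ`-set. -/
theorem indicator_isBaireOne_iff_isCZSet {X : Type*} [TopologicalSpace X] [T35Space X]
    (A : Set X) :
    IsBaireOne (A.indicator fun _ => (1 : ℝ)) ↔ IsCZSet A := by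
  constructor
  · intro hb
    constructor
    · have h := isZerSigma_of_baireOne hb (1/2)
      have hA : {x | (1:ℝ)/2 < A.indicator (fun _ => (1:ℝ)) x} = A := by
        ext x; by_cases hx : x ∈ A <;> simp [hx] <;> norm_num
      rwa [hA] at h
    · have h := isZerSigma_of_baireOne hb.neg (-(1/2))
      have hAc : {x | -(1/2 : ℝ) < (-(A.indicator fun _ => (1:ℝ))) x} = Aᶜ := by
        ext x; by_cases hx : x ∈ A <;> simp [hx] <;> norm_num
      rw [hAc] at h
      obtain ⟨Z, hZ, hZA⟩ := h
      refine ⟨fun n => (Z n)ᶜ, fun n => ?_, ?_⟩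
      · simpa [IsCozeroSet, compl_compl] using hZ n
      · have : A = (⋃ n, Z n)ᶜ := by rw [← hZA, compl_compl]
        simpa [Set.compl_iUnion] using this
  · rintro ⟨⟨Z, hZ, hAZ⟩, ⟨U, hU, hAU⟩⟩
    choose fz hfz hZf using hZ
    choose fu hfu hUf using hU
    set P : ℕ → Set X := fun n => ⋃ k ∈ Finset.range (n+1), Z k with hP
    set V : ℕ → Set X := fun n => ⋂ k ∈ Finset.range (n+1), U k with hV
    have hPz : ∀ n, IsZeroSet (P n) := by
      intro n
      refine ⟨fun x => ∏ k ∈ Finset.range (n+1), fz k x, by fun_prop, ?_⟩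
      ext x
      simp only [hP, Set.mem_iUnion, Set.mem_preimage, Set.mem_singleton_iff,
        Finset.prod_eq_zero_iff]
      constructor
      · rintro ⟨k, hk, hx⟩
        rw [hZf k] at hx
        exact ⟨k, hk, by simpa using hx⟩
      · rintro ⟨k, hk, hx⟩
        exact ⟨k, hk, by rw [hZf k]; simpa using hx⟩
    have hVc : ∀ n, IsCozeroSet (V n) := by
      intro n
      refine ⟨fun x => ∏ k ∈ Finset.range (n+1), fu k x, by fun_prop, ?_⟩
      ext x
      simp only [hV, Set.mem_compl_iff, Set.mem_iInter, Set.mem_preimage,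
        Set.mem_singleton_iff, Finset.prod_eq_zero_iff, not_forall]
      constructor
      · rintro ⟨k, hk, hx⟩
        have : x ∈ (U k)ᶜ := hx
        rw [hUf k] at this
        exact ⟨k, hk, by simpa using this⟩
      · rintro ⟨k, hk, hx⟩
        refine ⟨k, hk, ?_⟩
        show x ∈ (U k)ᶜ
        rw [hUf k]; simpa using hx
    have hPA : ∀ n, P n ⊆ A := by
      intro n x hx
      simp only [hP, Set.mem_iUnion] at hx
      obtain ⟨k, _, hx⟩ := hx
      rw [hAZ]; exact Set.mem_iUnion.mpr ⟨k, hx⟩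
    have hAV : ∀ n, A ⊆ V n := by
      intro n x hx
      simp only [hV, Set.mem_iInter]
      intro k _
      rw [hAU] at hx
      exact Set.mem_iInter.mp hx k
    choose g hg hg1 hg0 using fun n => exists_sep (hPz n) (hVc n) ((hPA n).trans (hAV n))
    refine ⟨g, hg, ?_⟩
    intro x
    by_cases hx : x ∈ A
    · have hind : A.indicator (fun _ => (1:ℝ)) x = 1 := Set.indicator_of_mem hx 1
      rw [hind]
      obtain ⟨k, hk⟩ := Set.mem_iUnion.mp (hAZ ▸ hx)
      have hev : (fun n => g n x) =ᶠ[Filter.atTop] fun _ => (1:ℝ) := by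
        refine Filter.eventually_atTop.mpr ⟨k, fun n hn => ?_⟩
        refine hg1 n x ?_
        simp only [hP, Set.mem_iUnion]
        exact ⟨k, Finset.mem_range.mpr (Nat.lt_succ_of_le hn), hk⟩
      exact Filter.Tendsto.congr' hev.symm tendsto_const_nhds
    · have hind : A.indicator (fun _ => (1:ℝ)) x = 0 := Set.indicator_of_notMem hx 1
      rw [hind]
      have : x ∉ ⋂ n, U n := by rwa [← hAU]
      obtain ⟨k, hk⟩ := by simpa [Set.mem_iInter] using this
      have hev : (fun n => g n x) =ᶠ[Filter.atTop] fun _ => (0:ℝ) := by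
        refine Filter.eventually_atTop.mpr ⟨k, fun n hn => ?_⟩
        refine hg0 n x ?_
        simp only [hV, Set.mem_iInter, not_forall]
        exact ⟨k, Finset.mem_range.mpr (Nat.lt_succ_of_le hn), hk⟩
      exact Filter.Tendsto.congr' hev.symm tendsto_const_nhds
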